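/- arXiv:1112.5659 — 8 statements merged into one kernel-verified Lean document; each statement's English description precedes it below -/
import Mathlib

section
/- Let p be a distribution over {1,...,n}, let I be a partition of {1,...,n} into intervals such that d_TV(p, p_f^I) ≤ ε (where p_f^I is the flattening of p with respect to I), and let J be a refinement of I into intervals. Then d_TV(p, p_f^J) ≤ 2ε. -/
open Finset

/-- Total variation distance between two distributions on `Fin n`. -/
noncomputable def dTV {n : ℕ} (p q : Fin n → ℝ) : ℝ := (1/2) * ∑ i, |p i - q i|

/-- The block (fiber) of the partition `part` containing index `j`. -/
def block {n ℓ : ℕ} (part : Fin n → Fin ℓ) (j : Fin ℓ) : Finset (Fin n) :=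
  Finset.univ.filter (fun t => part t = j)

/-- The flattened distribution: averages `p`'s mass uniformly over each block. -/
noncomputable def flat {n ℓ : ℕ} (part : Fin n → Fin ℓ) (p : Fin n → ℝ) : Fin n → ℝ :=
  fun i => (∑ t ∈ block part (part i), p t) / ((block part (part i)).card : ℝ)

/-- The reduced distribution on `Fin ℓ`: `j ↦ p(I_j)`. -/
noncomputable def reduced {n ℓ : ℕ} (part : Fin n → Fin ℓ) (p : Fin n → ℝ) : Fin ℓ → ℝ :=
  fun j => ∑ t ∈ block part j, p t

lemma flat_of_constant {n b : ℕ} (f : Fin n → Fin b) (q : Fin n → ℝ)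
    (hc : ∀ i i', f i = f i' → q i = q i') : flat f q = q := by
  funext i
  have hi : i ∈ block f (f i) := by simp [block]
  have hconst : ∀ t ∈ block f (f i), q t = q i := by
    intro t ht
    exact hc t i (by simpa [block] using ht)
  rw [flat, Finset.sum_congr rfl hconst, Finset.sum_const, nsmul_eq_mul]
  have hcard : (0:ℝ) < (block f (f i)).card := by
    exact_mod_cast Finset.card_pos.mpr ⟨i, hi⟩
  field_simp

lemma flat_contract {n b : ℕ} (f : Fin n → Fin b) (q r : Fin n → ℝ) :
    ∑ i, |flat f q i - flat f r i| ≤ ∑ i, |q i - r i| := by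
  have hfib : ∀ g : Fin n → ℝ, ∑ i, g i = ∑ j, ∑ i ∈ block f j, g i := by
    intro g
    rw [← Finset.sum_fiberwise Finset.univ f g]
    rfl
  rw [hfib (fun i => |flat f q i - flat f r i|), hfib (fun i => |q i - r i|)]
  apply Finset.sum_le_sum
  intro j _
  have hconst : ∀ i ∈ block f j,
      |flat f q i - flat f r i| = |∑ t ∈ block f j, (q t - r t)| / ((block f j).card : ℝ) := by
    intro i hi
    have hfi : f i = j := by simpa [block] using hi
    rw [flat, flat, hfi, div_sub_div_same, ← Finset.sum_sub_distrib, abs_div,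
      abs_of_nonneg (by positivity : (0:ℝ) ≤ ((block f j).card : ℝ))]
  rw [Finset.sum_congr rfl hconst, Finset.sum_const, nsmul_eq_mul]
  rcases Finset.eq_empty_or_nonempty (block f j) with he | hne
  · simp [he]
  · have hc : ((block f j).card : ℝ) ≠ 0 := by
      exact_mod_cast (Finset.card_pos.mpr hne).ne'
    rw [mul_comm, div_mul_cancel₀ _ hc]
    exact Finset.abs_sum_le_sum_abs _ _

theorem stmt3 {n a b : ℕ} (p : Fin n → ℝ) (partI : Fin n → Fin a) (partJ : Fin n → Fin b)
    (ε : ℝ)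
    (hp0 : ∀ i, 0 ≤ p i) (hp1 : ∑ i, p i = 1)
    (hintI : ∀ j : Fin a, ∃ x y : Fin n, x ≤ y ∧ block partI j = Finset.Icc x y)
    (hintJ : ∀ j : Fin b, ∃ x y : Fin n, x ≤ y ∧ block partJ j = Finset.Icc x y)
    (hrefines : ∀ i i' : Fin n, partJ i = partJ i' → partI i = partI i')
    (h : dTV p (flat partI p) ≤ ε) :
    dTV p (flat partJ p) ≤ 2 * ε := by
  have hflat : flat partJ (flat partI p) = flat partI p := by
    apply flat_of_constant
    intro i i' hii
    have := hrefines i i' hii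
    simp [flat, this]
  have h2 : ∑ i, |flat partI p i - flat partJ p i| ≤ ∑ i, |flat partI p i - p i| := by
    have := flat_contract partJ (flat partI p) p
    rwa [hflat] at this
  have h3 : ∑ i, |flat partI p i - p i| = ∑ i, |p i - flat partI p i| := by
    simp [abs_sub_comm]
  have htri : ∑ i, |p i - flat partJ p i| ≤
      ∑ i, |p i - flat partI p i| + ∑ i, |flat partI p i - flat partJ p i| := by
    rw [← Finset.sum_add_distrib]
    apply Finset.sum_le_sum
    intro i _
    exact abs_sub_le _ _ _
  rw [dTV] at h ⊢
  rw [h3] at h2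
  linarith [htri]
end

section
/- Fix ε with 1/n < ε ≤ 1. Consider the partition of {1,...,n} into consecutive intervals I_1,...,I_ℓ where the i-th interval (for i < ℓ) has length ⌊(1+ε)^i⌋ and the last interval takes the remainder, with ℓ the smallest integer such that Σ_{i=1}^ℓ ⌊(1+ε)^i⌋ ≥ n. Then ℓ = O((1/ε)·log(1+εn)), and for every non-increasing probability distribution p over {1,...,n}, the flattened distribution p_f obtained by averaging p over each interval satisfies d_TV(p, p_f) = O(ε). -/
open Finset

/-- Length of the `i`-th Birgé interval: `⌊(1+ε)^i⌋`. -/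
noncomputable def blen (ε : ℝ) (i : ℕ) : ℕ := ⌊(1+ε)^i⌋₊

/-- Sum of the first `j` Birgé interval lengths. -/
noncomputable def bsum (ε : ℝ) (j : ℕ) : ℕ := ∑ i ∈ Finset.Icc 1 j, blen ε i

/-- Index of the Birgé interval containing the point `t` (1-indexed): the smallest `j`
with `t ≤ blen ε 1 + ⋯ + blen ε j`.  In particular `bidx ε n` is the smallest `ℓ` with
`∑_{i=1}^ℓ ⌊(1+ε)^i⌋ ≥ n`, i.e. the number of intervals of the oblivious decomposition. -/
noncomputable def bidx (ε : ℝ) (t : ℕ) : ℕ := sInf {j | t ≤ bsum ε j}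


lemma blen_one_le {ε : ℝ} (hε : 0 ≤ ε) (i : ℕ) : 1 ≤ blen ε i := by
  apply Nat.le_floor
  push_cast
  exact one_le_pow₀ (by linarith)

lemma blen_le_real {ε : ℝ} (hε : 0 ≤ ε) (i : ℕ) : (blen ε i : ℝ) ≤ (1+ε)^i :=
  Nat.floor_le (by positivity)

lemma real_le_two_blen {ε : ℝ} (hε : 0 ≤ ε) (i : ℕ) : (1+ε)^i ≤ 2*(blen ε i : ℝ) := by
  have h1 := blen_one_le hε i
  have h2 := Nat.lt_floor_add_one ((1+ε)^i)
  have h1' : (1:ℝ) ≤ (blen ε i : ℝ) := by exact_mod_cast h1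
  have h2' : (1+ε)^i < (blen ε i : ℝ) + 1 := h2
  linarith

lemma bsum_mono {ε : ℝ} : Monotone (bsum ε) := fun a b h =>
  Finset.sum_le_sum_of_subset (Finset.Icc_subset_Icc_right h)

lemma le_bsum {ε : ℝ} (hε : 0 ≤ ε) (j : ℕ) : j ≤ bsum ε j := by
  have := Finset.card_nsmul_le_sum (Finset.Icc 1 j) (blen ε) 1 (fun i _ => blen_one_le hε i)
  simpa [Nat.card_Icc, bsum] using this

lemma geom_sum_eq' {ε : ℝ} (m : ℕ) :
    ε * ∑ i ∈ Finset.Icc 1 m, (1+ε)^i = (1+ε)^(m+1) - (1+ε) := by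
  induction m with
  | zero => simp
  | succ m ih =>
    rw [Finset.sum_Icc_succ_top (by omega)]
    ring_nf
    ring_nf at ih
    linear_combination ih

lemma bsum_real_ge {ε : ℝ} (hε : 0 < ε) (m : ℕ) :
    (1+ε)^(m+1) - (1+ε) ≤ 2*ε*(bsum ε m : ℝ) := by
  have h1 : ∑ i ∈ Finset.Icc 1 m, (1+ε)^i ≤ ∑ i ∈ Finset.Icc 1 m, 2*(blen ε i : ℝ) :=
    Finset.sum_le_sum (fun i _ => real_le_two_blen hε.le i)
  have h2 : (bsum ε m : ℝ) = ∑ i ∈ Finset.Icc 1 m, (blen ε i : ℝ) := by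
    simp [bsum]
  have h3 := geom_sum_eq' (ε := ε) m
  have h4 : ∑ i ∈ Finset.Icc 1 m, 2*(blen ε i : ℝ) = 2 * (bsum ε m : ℝ) := by
    rw [h2, Finset.mul_sum]
  nlinarith [mul_le_mul_of_nonneg_left h1 hε.le]

lemma le_bsum_bidx {ε : ℝ} (hε : 0 ≤ ε) (t : ℕ) : t ≤ bsum ε (bidx ε t) :=
  Nat.sInf_mem (⟨t, le_bsum hε t⟩ : {j | t ≤ bsum ε j}.Nonempty)

lemma bsum_lt_of_lt_bidx {ε : ℝ} {t j : ℕ} (h : j < bidx ε t) : bsum ε j < t := by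
  by_contra hc
  push_neg at hc
  have h2 : bidx ε t ≤ j := Nat.sInf_le (show j ∈ {j | t ≤ bsum ε j} from hc)
  omega

lemma bidx_pos {ε : ℝ} (hε : 0 ≤ ε) {t : ℕ} (ht : 1 ≤ t) : 1 ≤ bidx ε t := by
  by_contra h
  push_neg at h
  have h0 : bidx ε t = 0 := by omega
  have := le_bsum_bidx hε t
  rw [h0] at this
  simp [bsum] at this
  omega

lemma bidx_eq_iff {ε : ℝ} (hε : 0 ≤ ε) {t j : ℕ} (ht : 1 ≤ t) (hj : 1 ≤ j) :
    bidx ε t = j ↔ (bsum ε (j-1) < t ∧ t ≤ bsum ε j) := by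
  constructor
  · rintro rfl
    exact ⟨bsum_lt_of_lt_bidx (by omega), le_bsum_bidx hε t⟩
  · rintro ⟨h1, h2⟩
    have hle : bidx ε t ≤ j := Nat.sInf_le h2
    have hgt : ¬ (bidx ε t ≤ j - 1) := fun hc =>
      absurd (le_trans (le_bsum_bidx hε t) (bsum_mono hc)) (by omega)
    omega

lemma fiber_eq {ε : ℝ} (hε : 0 ≤ ε) {n j : ℕ} (hj : 1 ≤ j) :
    (Finset.Icc 1 n).filter (fun s => bidx ε s = j)
      = Finset.Ioc (bsum ε (j-1)) (min (bsum ε j) n) := by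
  ext s
  simp only [Finset.mem_filter, Finset.mem_Icc, Finset.mem_Ioc, le_min_iff]
  constructor
  · rintro ⟨⟨hs1, hs2⟩, hb⟩
    have h := (bidx_eq_iff hε hs1 hj).mp hb
    exact ⟨h.1, h.2, hs2⟩
  · rintro ⟨h1, h2, h3⟩
    have hs1 : 1 ≤ s := by omega
    exact ⟨⟨hs1, h3⟩, (bidx_eq_iff hε hs1 hj).mpr ⟨h1, h2⟩⟩

lemma pmono {n : ℕ} {p : ℕ → ℝ} (hdec : ∀ i, 1 ≤ i → i < n → p (i+1) ≤ p i) :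
    ∀ x y, 1 ≤ x → x ≤ y → y ≤ n → p y ≤ p x := by
  intro x y hx hxy
  induction y, hxy using Nat.le_induction with
  | base => intro _; exact le_refl _
  | succ y hy ih =>
    intro hyn
    have h1 : p (y+1) ≤ p y := hdec y (by omega) (by omega)
    have h2 : p y ≤ p x := ih (by omega)
    linarith

lemma tele_sum {p : ℕ → ℝ} (a : ℕ) :
    ∀ b, a < b → ∑ s ∈ Finset.Ioc a (b-1), (p s - p (s+1)) = p (a+1) - p b := by
  intro b
  induction b with
  | zero => intro h; exact absurd h (Nat.not_lt_zero a)
  | succ b ih =>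
    intro h
    rcases Nat.lt_or_ge a b with hb | hb
    · have hb1 : b - 1 + 1 = b := by omega
      have h2 : ∑ s ∈ Finset.Ioc a b, (p s - p (s+1))
          = (∑ s ∈ Finset.Ioc a (b-1), (p s - p (s+1))) + (p b - p (b+1)) := by
        conv_lhs => rw [← hb1]
        rw [Finset.sum_Ioc_succ_top (by omega : a ≤ b-1)]
        rw [hb1]
      rw [show b + 1 - 1 = b by omega, h2, ih hb]
      ring
    · have hba : b = a := by omega
      subst hba
      simp

lemma abel_id {p : ℕ → ℝ} :
    ∀ N : ℕ, ∑ s ∈ Finset.Icc 1 N, (s:ℝ) * (p s - p (s+1))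
      = ∑ s ∈ Finset.Icc 1 N, p s - (N:ℝ) * p (N+1) := by
  intro N
  induction N with
  | zero => simp
  | succ N ih =>
    rw [Finset.sum_Icc_succ_top (by omega), Finset.sum_Icc_succ_top (by omega), ih]
    push_cast
    ring

lemma half_le_log {ε : ℝ} (h0 : 0 < ε) (h1 : ε ≤ 1) : ε/2 ≤ Real.log (1+ε) := by
  have h2 : Real.exp (ε/2) ≤ 1 + ε := by
    have ha : 1 - ε/2 ≤ Real.exp (-(ε/2)) := by
      have := Real.add_one_le_exp (-(ε/2)); linarith
    have hc : Real.exp (ε/2) = 1 / Real.exp (-(ε/2)) := by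
      rw [Real.exp_neg]; field_simp
    rw [hc, div_le_iff₀ (Real.exp_pos _)]
    nlinarith [ha]
  calc ε/2 = Real.log (Real.exp (ε/2)) := (Real.log_exp _).symm
    _ ≤ Real.log (1+ε) := Real.log_le_log (Real.exp_pos _) h2

lemma part1 {n : ℕ} {ε : ℝ} (hε1 : 1 / (n : ℝ) < ε) (hε2 : ε ≤ 1) :
    (bidx ε n : ℝ) ≤ 100 * (1/ε) * Real.log (1 + ε * n) := by
  have hε0 : 0 < ε := lt_of_le_of_lt (by positivity) hε1
  set L := Real.log (1 + ε * n) with hL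
  have hL0 : 0 ≤ L := Real.log_nonneg (by nlinarith [mul_nonneg hε0.le (Nat.cast_nonneg n)])
  set ℓ := bidx ε n with hℓdef
  rcases Nat.eq_zero_or_pos ℓ with h0 | hpos
  · rw [h0]
    push_cast
    have : 0 ≤ 100 * (1/ε) * L := by positivity
    linarith
  · have hlt : bsum ε (ℓ-1) < n := bsum_lt_of_lt_bidx (by omega)
    have hn1 : 1 ≤ n := by omega
    have hn0 : (0:ℝ) < (n:ℝ) := by exact_mod_cast hn1
    have hεn : 1 < ε * n := by
      rw [div_lt_iff₀ hn0] at hε1; linarith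
    have hbn : (bsum ε (ℓ-1) : ℝ) + 1 ≤ (n:ℝ) := by exact_mod_cast hlt
    have hkey : (1+ε)^ℓ ≤ 2*(1+ε*n) := by
      have h1 := bsum_real_ge hε0 (ℓ-1)
      rw [show ℓ - 1 + 1 = ℓ by omega] at h1
      have h2 : 2*ε*(bsum ε (ℓ-1) : ℝ) ≤ 2*ε*((n:ℝ)-1) := by
        apply mul_le_mul_of_nonneg_left (by linarith) (by positivity)
      nlinarith
    have hlog : (ℓ:ℝ) * Real.log (1+ε) ≤ Real.log 2 + L := by
      have h3 := Real.log_le_log (by positivity) hkey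
      rw [Real.log_pow, Real.log_mul (by norm_num) (by positivity)] at h3
      exact_mod_cast h3
    have hlog2 : Real.log 2 ≤ L := Real.log_le_log (by norm_num) (by linarith)
    have hld : ε/2 ≤ Real.log (1+ε) := half_le_log hε0 hε2
    have hc1 : (ℓ:ℝ) * (ε/2) ≤ 2 * L := by
      have h4 : (ℓ:ℝ) * (ε/2) ≤ (ℓ:ℝ) * Real.log (1+ε) :=
        mul_le_mul_of_nonneg_left hld (Nat.cast_nonneg ℓ)
      linarith
    have h5 : (ℓ:ℝ) ≤ 4 * L / ε := by
      rw [le_div_iff₀ hε0]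
      linarith
    have h6 : 4 * L / ε ≤ 100 * (1/ε) * L := by
      have h7 : 0 ≤ L / ε := div_nonneg hL0 hε0.le
      have e1 : 4 * L / ε = 4 * (L/ε) := by ring
      have e2 : 100 * (1/ε) * L = 100 * (L/ε) := by ring
      rw [e1, e2]; linarith
    linarith

lemma part2 {n : ℕ} {ε : ℝ} (hε1 : 1 / (n : ℝ) < ε) (hε2 : ε ≤ 1)
    (p : ℕ → ℝ) (hp0 : ∀ i, 0 ≤ p i) (hp1 : (∑ i ∈ Finset.Icc 1 n, p i) = 1)
    (hdec : ∀ i, 1 ≤ i → i < n → p (i+1) ≤ p i) :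
    (1/2) * ∑ t ∈ Finset.Icc 1 n,
        |p t - (∑ s ∈ (Finset.Icc 1 n).filter (fun s => bidx ε s = bidx ε t), p s) /
            (((Finset.Icc 1 n).filter (fun s => bidx ε s = bidx ε t)).card : ℝ)| ≤ 100 * ε := by
  have hε0 : 0 < ε := lt_of_le_of_lt (by positivity) hε1
  rcases Nat.eq_zero_or_pos n with rfl | hn1
  · simp at hp1
  have hmono := pmono (n := n) (p := p) hdec
  set f : ℕ → ℝ := fun t =>
    |p t - (∑ s ∈ (Finset.Icc 1 n).filter (fun s => bidx ε s = bidx ε t), p s) /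
        (((Finset.Icc 1 n).filter (fun s => bidx ε s = bidx ε t)).card : ℝ)| with hf
  set g : ℕ → ℝ := fun s => 4 * ε * (s:ℝ) * (p s - p (s+1)) with hg
  set T : ℕ → Finset ℕ := fun j => Finset.Ioc (bsum ε (j-1)) (min (bsum ε j) n - 1) with hT
  have hre : ∑ t ∈ Finset.Icc 1 n, f t
      = ∑ j ∈ (Finset.Icc 1 n).image (fun t => bidx ε t),
          ∑ t ∈ (Finset.Icc 1 n).filter (fun t => bidx ε t = j), f t :=
    (Finset.sum_fiberwise_of_maps_to (fun x hx => Finset.mem_image_of_mem _ hx) f).symm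
  have himgpos : ∀ j ∈ (Finset.Icc 1 n).image (fun t => bidx ε t), 1 ≤ j := by
    intro j hj
    obtain ⟨t0, ht0A, ht0j⟩ := Finset.mem_image.mp hj
    exact ht0j ▸ bidx_pos hε0.le (Finset.mem_Icc.mp ht0A).1
  -- per fiber bound
  have hfib : ∀ j ∈ (Finset.Icc 1 n).image (fun t => bidx ε t),
      ∑ t ∈ (Finset.Icc 1 n).filter (fun t => bidx ε t = j), f t ≤ ∑ s ∈ T j, g s := by
    intro j hj
    obtain ⟨t0, ht0A, ht0j⟩ := Finset.mem_image.mp hj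
    have hj1 : 1 ≤ j := himgpos j hj
    set a := bsum ε (j-1) with ha
    set b := min (bsum ε j) n with hb
    have hfe : (Finset.Icc 1 n).filter (fun s => bidx ε s = j) = Finset.Ioc a b :=
      fiber_eq hε0.le hj1
    have ht0mem : t0 ∈ Finset.Ioc a b := by
      rw [← hfe]; exact Finset.mem_filter.mpr ⟨ht0A, ht0j⟩
    have hab : a < b := lt_of_lt_of_le (Finset.mem_Ioc.mp ht0mem).1 (Finset.mem_Ioc.mp ht0mem).2
    have hbn : b ≤ n := min_le_right _ _
    set q := p (a+1) with hq
    set r := p b with hr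
    set m : ℝ := (∑ s ∈ Finset.Ioc a b, p s) / ((Finset.Ioc a b).card : ℝ) with hm
    have hcard : (Finset.Ioc a b).card = b - a := Nat.card_Ioc a b
    have hcard0 : 0 < b - a := by omega
    have hcardR : (0:ℝ) < ((Finset.Ioc a b).card : ℝ) := by
      rw [hcard]; exact_mod_cast hcard0
    have hpb : ∀ t ∈ Finset.Ioc a b, r ≤ p t ∧ p t ≤ q := by
      intro t ht
      obtain ⟨ht1, ht2⟩ := Finset.mem_Ioc.mp ht
      exact ⟨hmono t b (by omega) ht2 hbn, hmono (a+1) t (by omega) (by omega) (le_trans ht2 hbn)⟩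
    have hmle : m ≤ q := by
      rw [hm, div_le_iff₀ hcardR]
      have h := Finset.sum_le_card_nsmul (Finset.Ioc a b) p q (fun t ht => (hpb t ht).2)
      rw [nsmul_eq_mul] at h
      linarith
    have hmge : r ≤ m := by
      rw [hm, le_div_iff₀ hcardR]
      have h := Finset.card_nsmul_le_sum (Finset.Ioc a b) p r (fun t ht => (hpb t ht).1)
      rw [nsmul_eq_mul] at h
      linarith
    have hstepA : ∑ t ∈ (Finset.Icc 1 n).filter (fun t => bidx ε t = j), f t
        ≤ ((b - a : ℕ):ℝ) * (q - r) := by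
      have he : ∀ t ∈ Finset.Ioc a b, f t = |p t - m| := by
        intro t ht
        have htj : bidx ε t = j := by
          rw [← hfe] at ht
          exact (Finset.mem_filter.mp ht).2
        rw [hf]
        simp only
        rw [htj, hfe, ← hm]
      rw [Finset.sum_congr hfe he]
      have h := Finset.sum_le_card_nsmul (Finset.Ioc a b) (fun t => |p t - m|) (q - r)
        (fun t ht => by
          have h1 := (hpb t ht).1
          have h2 := (hpb t ht).2
          exact abs_le.mpr ⟨by linarith, by linarith⟩)
      rw [nsmul_eq_mul, hcard] at h
      exact h
    have htel : ∑ s ∈ Finset.Ioc a (b-1), (p s - p (s+1)) = q - r := tele_sum a b hab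
    have hstepB : ((b - a : ℕ):ℝ) * (q - r) ≤ ∑ s ∈ T j, g s := by
      rw [hT]
      simp only
      rw [← htel, Finset.mul_sum]
      apply Finset.sum_le_sum
      intro s hs
      obtain ⟨hs1, hs2⟩ := Finset.mem_Ioc.mp hs
      have hk2 : a + 2 ≤ b := by omega
      have hds : 0 ≤ p s - p (s+1) := by
        have h := hmono s (s+1) (by omega) (by omega) (by omega)
        linarith
      have hkblen : b - a ≤ blen ε j := by
        have hsucc : bsum ε j = bsum ε (j-1) + blen ε j := by
          have e : bsum ε ((j-1)+1) = bsum ε (j-1) + blen ε ((j-1)+1) := by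
            simp only [bsum]
            rw [Finset.sum_Icc_succ_top (by omega)]
          rw [show (j-1)+1 = j by omega] at e
          exact e
        have hble : b ≤ bsum ε j := min_le_left _ _
        omega
      have hX2 : (2:ℝ) ≤ (1+ε)^j := by
        have h2b : 2 ≤ blen ε j := by omega
        have h2b' : (2:ℝ) ≤ (blen ε j : ℝ) := by exact_mod_cast h2b
        linarith [blen_le_real hε0.le j]
      have hkX : ((b-a:ℕ):ℝ) ≤ (1+ε)^j := by
        have h1 : ((b-a:ℕ):ℝ) ≤ (blen ε j : ℝ) := by exact_mod_cast hkblen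
        linarith [blen_le_real hε0.le j]
      have hXa : (1+ε)^j ≤ 2*ε*(a:ℝ) + (1+ε) := by
        have h1 := bsum_real_ge hε0 (j-1)
        rw [show j - 1 + 1 = j by omega] at h1
        linarith
      have hsa : (a:ℝ) + 1 ≤ (s:ℝ) := by exact_mod_cast hs1
      have hεs : 1 + ε ≤ 2*ε*(s:ℝ) := by
        have hms : 2*ε*((a:ℝ)+1) ≤ 2*ε*(s:ℝ) := mul_le_mul_of_nonneg_left (by linarith) (by positivity)
        nlinarith
      have hk4 : ((b-a:ℕ):ℝ) ≤ 4*ε*(s:ℝ) := by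
        have hms : 2*ε*(a:ℝ) ≤ 2*ε*((s:ℝ)-1) := mul_le_mul_of_nonneg_left (by linarith) (by positivity)
        nlinarith
      rw [hg]
      simp only
      exact mul_le_mul_of_nonneg_right hk4 hds
    exact le_trans hstepA hstepB
  -- disjointness and inclusion into Icc 1 (n-1)
  have hTsub : ∀ j, 1 ≤ j → T j ⊆ (Finset.Icc 1 n).filter (fun s => bidx ε s = j) := by
    intro j hj1
    rw [fiber_eq hε0.le hj1, hT]
    intro s hs
    simp only [Finset.mem_Ioc] at hs ⊢
    exact ⟨hs.1, by omega⟩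
  have hdisj : (((Finset.Icc 1 n).image (fun t => bidx ε t) : Finset ℕ) : Set ℕ).PairwiseDisjoint T := by
    intro j hj j' hj' hne
    have hj1 := himgpos j (Finset.mem_coe.mp hj)
    have hj1' := himgpos j' (Finset.mem_coe.mp hj')
    simp only [Function.onFun]
    rw [Finset.disjoint_left]
    intro s hsj hsj'
    have h1 := (Finset.mem_filter.mp (hTsub j hj1 hsj)).2
    have h2 := (Finset.mem_filter.mp (hTsub j' hj1' hsj')).2
    exact hne (h1 ▸ h2 ▸ rfl)
  have hsumC : ∑ j ∈ (Finset.Icc 1 n).image (fun t => bidx ε t), ∑ s ∈ T j, g s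
      ≤ ∑ s ∈ Finset.Icc 1 (n-1), g s := by
    rw [← Finset.sum_biUnion hdisj]
    apply Finset.sum_le_sum_of_subset_of_nonneg
    · intro s hs
      obtain ⟨j, hj, hsj⟩ := Finset.mem_biUnion.mp hs
      have hj1 := himgpos j hj
      have hmm := Finset.mem_filter.mp (hTsub j hj1 hsj)
      have hsn := Finset.mem_Icc.mp hmm.1
      have hs2 : s ≤ min (bsum ε j) n - 1 := by
        have := Finset.mem_Ioc.mp (show s ∈ Finset.Ioc (bsum ε (j-1)) (min (bsum ε j) n - 1) from hsj)
        exact this.2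
      have hmin := min_le_right (bsum ε j) n
      exact Finset.mem_Icc.mpr ⟨hsn.1, by omega⟩
    · intro s hs _
      obtain ⟨h1, h2⟩ := Finset.mem_Icc.mp hs
      have hd : p (s+1) ≤ p s := hdec s h1 (by omega)
      rw [hg]
      simp only
      apply mul_nonneg
      apply mul_nonneg
      · positivity
      · exact Nat.cast_nonneg s
      · linarith
  have habel : ∑ s ∈ Finset.Icc 1 (n-1), g s ≤ 4 * ε := by
    have hid := abel_id (p := p) (n-1)
    have he : ∑ s ∈ Finset.Icc 1 (n-1), g s
        = 4*ε * (∑ s ∈ Finset.Icc 1 (n-1), (s:ℝ) * (p s - p (s+1))) := by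
      rw [Finset.mul_sum]
      exact Finset.sum_congr rfl (fun s _ => by rw [hg]; ring)
    rw [he, hid, show n - 1 + 1 = n by omega]
    have h1 : ∑ s ∈ Finset.Icc 1 (n-1), p s ≤ ∑ s ∈ Finset.Icc 1 n, p s :=
      Finset.sum_le_sum_of_subset_of_nonneg (Finset.Icc_subset_Icc_right (by omega))
        (fun i _ _ => hp0 i)
    have h2 : (0:ℝ) ≤ ((n-1:ℕ):ℝ) * p n := mul_nonneg (Nat.cast_nonneg _) (hp0 n)
    rw [hp1] at h1
    have hX : ∑ s ∈ Finset.Icc 1 (n-1), p s - ((n-1:ℕ):ℝ) * p n ≤ 1 := by linarith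
    calc 4*ε * (∑ s ∈ Finset.Icc 1 (n-1), p s - ((n-1:ℕ):ℝ) * p n) ≤ 4*ε*1 :=
          mul_le_mul_of_nonneg_left hX (by positivity)
      _ = 4*ε := by ring
  have htot : ∑ t ∈ Finset.Icc 1 n, f t ≤ 4 * ε := by
    rw [hre]
    calc ∑ j ∈ (Finset.Icc 1 n).image (fun t => bidx ε t),
          ∑ t ∈ (Finset.Icc 1 n).filter (fun t => bidx ε t = j), f t
        ≤ ∑ j ∈ (Finset.Icc 1 n).image (fun t => bidx ε t), ∑ s ∈ T j, g s :=
          Finset.sum_le_sum hfib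
      _ ≤ ∑ s ∈ Finset.Icc 1 (n-1), g s := hsumC
      _ ≤ 4 * ε := habel
  linarith

theorem stmt9 : ∃ C : ℝ, 0 < C ∧ ∀ (n : ℕ) (ε : ℝ), 1 / (n : ℝ) < ε → ε ≤ 1 →
    ((bidx ε n : ℝ) ≤ C * (1/ε) * Real.log (1 + ε * n)) ∧
    ∀ p : ℕ → ℝ, (∀ i, 0 ≤ p i) → (∑ i ∈ Finset.Icc 1 n, p i) = 1 →
      (∀ i, 1 ≤ i → i < n → p (i+1) ≤ p i) →
      (1/2) * ∑ t ∈ Finset.Icc 1 n,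
          |p t - (∑ s ∈ (Finset.Icc 1 n).filter (fun s => bidx ε s = bidx ε t), p s) /
              (((Finset.Icc 1 n).filter (fun s => bidx ε s = bidx ε t)).card : ℝ)| ≤
        C * ε := by
  refine ⟨100, by norm_num, ?_⟩
  intro n ε hε1 hε2
  exact ⟨part1 hε1 hε2, fun p hp0 hp1 hdec => part2 hε1 hε2 p hp0 hp1 hdec⟩
end

section
/- Let p be a distribution over {1,...,n}, I = [a,b] ⊆ {1,...,n} an interval with p_I monotone (non-increasing or non-decreasing), p(I) ≥ 99ε/(10000k), and suppose |p̂(I') − p(I')| ≤ ε²/(10000k) for every subinterval I' ⊆ I, where p̂ is another distribution (sub-distribution) on {1,...,n}. Then for every initial interval I' = [a,j] of I, |p_I(I') − p̂_I(I')| ≤ ε/49, where p_I and p̂_I are the conditional distributions on I. -/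
open Finset

theorem stmt10 (n k : ℕ) (hk : 1 ≤ k) (ε : ℝ) (hε0 : 0 < ε) (hε1 : ε ≤ 1)
    (a b : ℕ) (ha : 1 ≤ a) (hab : a ≤ b) (hbn : b ≤ n)
    (p phat : ℕ → ℝ)
    (hp0 : ∀ i, 0 ≤ p i) (hp1 : ∑ i ∈ Finset.Icc 1 n, p i = 1)
    (hphat0 : ∀ i, 0 ≤ phat i) (hphat1 : ∑ i ∈ Finset.Icc 1 n, phat i ≤ 1)
    (hmono : (∀ i, a ≤ i → i < b → p (i+1) ≤ p i) ∨ (∀ i, a ≤ i → i < b → p i ≤ p (i+1)))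
    (hmass : 99 * ε / (10000 * k) ≤ ∑ i ∈ Finset.Icc a b, p i)
    (hclose : ∀ a' b', a ≤ a' → b' ≤ b →
      |(∑ i ∈ Finset.Icc a' b', phat i) - ∑ i ∈ Finset.Icc a' b', p i| ≤
        ε ^ 2 / (10000 * k)) :
    ∀ j, a ≤ j → j ≤ b →
      |(∑ i ∈ Finset.Icc a j, p i) / (∑ i ∈ Finset.Icc a b, p i) -
          (∑ i ∈ Finset.Icc a j, phat i) / (∑ i ∈ Finset.Icc a b, phat i)| ≤ ε / 49 := by
  intro j hja hjb
  set A := ∑ i ∈ Finset.Icc a j, p i with hAdef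
  set Ahat := ∑ i ∈ Finset.Icc a j, phat i with hAhatdef
  set P := ∑ i ∈ Finset.Icc a b, p i with hPdef
  set Phat := ∑ i ∈ Finset.Icc a b, phat i with hPhatdef
  have hkR : (1:ℝ) ≤ (k:ℝ) := by exact_mod_cast hk
  have hD : (0:ℝ) < 10000 * (k:ℝ) := by nlinarith
  set δ := ε ^ 2 / (10000 * (k:ℝ)) with hδdef
  have hδ0 : 0 ≤ δ := by positivity
  have h1 : |Phat - P| ≤ δ := hclose a b le_rfl le_rfl
  have h2 : |Ahat - A| ≤ δ := hclose a j le_rfl hjb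
  have hA0 : 0 ≤ A := Finset.sum_nonneg fun i _ => hp0 i
  have hAP : A ≤ P :=
    Finset.sum_le_sum_of_subset_of_nonneg (Finset.Icc_subset_Icc_right hjb)
      (fun i _ _ => hp0 i)
  have hP0 : 0 < P := lt_of_lt_of_le (by positivity) hmass
  have hδε : δ ≤ ε / (10000 * (k:ℝ)) := by
    rw [hδdef]
    gcongr
    nlinarith
  have hPhat : 98 * ε / (10000 * (k:ℝ)) ≤ Phat := by
    have h1' := abs_le.mp h1
    have : 99 * ε / (10000 * (k:ℝ)) - ε / (10000 * (k:ℝ)) = 98 * ε / (10000 * (k:ℝ)) := by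
      ring
    linarith [hmass, hδε, h1'.1]
  have hPhat0 : 0 < Phat := lt_of_lt_of_le (by positivity) hPhat
  have hkey : A / P - Ahat / Phat = (A * (Phat - P) + (A - Ahat) * P) / (P * Phat) := by
    field_simp
    ring
  rw [hkey, abs_div, abs_of_pos (mul_pos hP0 hPhat0)]
  have hnum : |A * (Phat - P) + (A - Ahat) * P| ≤ 2 * δ * P := by
    calc |A * (Phat - P) + (A - Ahat) * P| ≤ |A * (Phat - P)| + |(A - Ahat) * P| :=
          abs_add_le _ _
      _ = A * |Phat - P| + |A - Ahat| * P := by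
          rw [abs_mul, abs_mul, abs_of_nonneg hA0, abs_of_pos hP0]
      _ ≤ P * δ + δ * P := by
          have : |A - Ahat| ≤ δ := by rwa [abs_sub_comm]
          have h3 : A * |Phat - P| ≤ P * δ := by
            have := abs_nonneg (Phat - P)
            nlinarith
          nlinarith
      _ = 2 * δ * P := by ring
  rw [div_le_iff₀ (mul_pos hP0 hPhat0)]
  have hPhat' : 2 * δ ≤ ε / 49 * Phat := by
    have he : ε / 49 * (98 * ε / (10000 * (k:ℝ))) = 2 * δ := by
      rw [hδdef]; ring
    have := mul_le_mul_of_nonneg_left hPhat (le_of_lt (by positivity : (0:ℝ) < ε / 49))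
    linarith
  calc |A * (Phat - P) + (A - Ahat) * P| ≤ 2 * δ * P := hnum
    _ ≤ (ε / 49 * Phat) * P := mul_le_mul_of_nonneg_right hPhat' (le_of_lt hP0)
    _ = ε / 49 * (P * Phat) := by ring
end

section
/- If p is a monotone (non-increasing or non-decreasing) distribution on an interval I and u_I is the uniform distribution on I, then the Kolmogorov distance between p and u_I equals their total variation distance: max over initial intervals I' of |p(I') − u_I(I')| = d_TV(p, u_I). -/
open Finset

private lemma step_mono {a b : ℕ} {q : ℕ → ℝ}
    (h : ∀ i, a ≤ i → i < b → q (i+1) ≤ q i) :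
    ∀ i j, a ≤ i → i ≤ j → j ≤ b → q j ≤ q i := by
  intro i j hai hij hjb
  induction j with
  | zero =>
    have : i = 0 := Nat.le_zero.mp hij
    subst this; exact le_refl _
  | succ k ih =>
    rcases Nat.lt_or_ge i (k+1) with h1 | h2
    · have hik : i ≤ k := by omega
      exact le_trans (h k (by omega) (by omega)) (ih hik (by omega))
    · have : i = k + 1 := by omega
      subst this; exact le_refl _

private lemma key (a b : ℕ) (hab : a ≤ b) (q : ℕ → ℝ)
    (hsum : ∑ i ∈ Icc a b, q i = 0)
    (hm : ∀ i j, a ≤ i → i ≤ j → j ≤ b → q j ≤ q i) :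
    (Icc a b).sup' (nonempty_Icc.mpr hab) (fun j => |∑ i ∈ Icc a j, q i|) =
      (1/2) * ∑ i ∈ Icc a b, |q i| := by
  have habne : (Icc a b).Nonempty := nonempty_Icc.mpr hab
  set P : ℝ := ∑ i ∈ Icc a b, max (q i) 0 with hP
  have hmax : ∀ x : ℝ, max x 0 = (x + |x|) / 2 := by
    intro x
    rcases le_total 0 x with h | h
    · rw [max_eq_left h, abs_of_nonneg h]; ring
    · rw [max_eq_right h, abs_of_nonpos h]; ring
  have hPhalf : P = (1/2) * ∑ i ∈ Icc a b, |q i| := by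
    rw [hP]
    simp_rw [hmax]
    rw [← Finset.sum_div, Finset.sum_add_distrib, hsum]
    ring
  -- upper bound
  have hupper : ∀ j ∈ Icc a b, |∑ i ∈ Icc a j, q i| ≤ P := by
    intro j hj
    rw [mem_Icc] at hj
    have hsub : Icc a j ⊆ Icc a b := Icc_subset_Icc_right hj.2
    have hle1 : ∑ i ∈ Icc a j, q i ≤ P := by
      calc ∑ i ∈ Icc a j, q i ≤ ∑ i ∈ Icc a j, max (q i) 0 :=
            Finset.sum_le_sum (fun i _ => le_max_left _ _)
        _ ≤ P := Finset.sum_le_sum_of_subset_of_nonneg hsub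
            (fun i _ _ => le_max_right _ _)
    have hsplit : ∑ i ∈ Icc a b \ Icc a j, q i + ∑ i ∈ Icc a j, q i
        = ∑ i ∈ Icc a b, q i := Finset.sum_sdiff hsub
    have hle2 : -(∑ i ∈ Icc a j, q i) ≤ P := by
      have h1 : -(∑ i ∈ Icc a j, q i) = ∑ i ∈ Icc a b \ Icc a j, q i := by
        rw [hsum] at hsplit; linarith
      rw [h1]
      calc ∑ i ∈ Icc a b \ Icc a j, q i
          ≤ ∑ i ∈ Icc a b \ Icc a j, max (q i) 0 :=
            Finset.sum_le_sum (fun i _ => le_max_left _ _)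
        _ ≤ P := Finset.sum_le_sum_of_subset_of_nonneg (Finset.sdiff_subset)
            (fun i _ _ => le_max_right _ _)
    exact abs_le.mpr ⟨by linarith, hle1⟩
  -- lower bound
  have hqa : 0 ≤ q a := by
    by_contra hqa
    push_neg at hqa
    have hle : ∑ i ∈ Icc a b, q i ≤ (Icc a b).card • q a :=
      Finset.sum_le_card_nsmul _ _ _ (fun i hi => by
        rw [mem_Icc] at hi; exact hm a i le_rfl hi.1 hi.2)
    have hcard : 0 < (Icc a b).card := Finset.card_pos.mpr habne
    have : ((Icc a b).card : ℝ) * q a < 0 :=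
      mul_neg_of_pos_of_neg (by exact_mod_cast hcard) hqa
    rw [hsum, nsmul_eq_mul] at hle
    linarith
  set T : Finset ℕ := (Icc a b).filter (fun i => 0 ≤ q i) with hT
  have haT : a ∈ T := by
    rw [hT, mem_filter, mem_Icc]; exact ⟨⟨le_rfl, hab⟩, hqa⟩
  have hTne : T.Nonempty := ⟨a, haT⟩
  set j : ℕ := T.max' hTne with hj
  have hjT : j ∈ T := T.max'_mem hTne
  have hjIcc : j ∈ Icc a b := Finset.mem_of_mem_filter _ hjT
  have hjq : 0 ≤ q j := (Finset.mem_filter.mp hjT).2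
  rw [mem_Icc] at hjIcc
  have hTeq : Icc a j = T := by
    ext i
    rw [mem_Icc, hT, mem_filter, mem_Icc]
    constructor
    · intro ⟨h1, h2⟩
      exact ⟨⟨h1, le_trans h2 hjIcc.2⟩, le_trans hjq (hm i j h1 h2 hjIcc.2)⟩
    · intro ⟨⟨h1, _⟩, _⟩
      exact ⟨h1, T.le_max' i (by rw [hT, mem_filter, mem_Icc]; tauto)⟩
  have hFj : ∑ i ∈ Icc a j, q i = P := by
    rw [hTeq, hT, Finset.sum_filter, hP]
    apply Finset.sum_congr rfl
    intro i _
    split_ifs with h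
    · rw [max_eq_left h]
    · rw [max_eq_right (le_of_not_ge h)]
  have hP0 : 0 ≤ P := Finset.sum_nonneg (fun i _ => le_max_right _ _)
  have hlow : P ≤ (Icc a b).sup' habne (fun j => |∑ i ∈ Icc a j, q i|) := by
    have := Finset.le_sup' (fun j => |∑ i ∈ Icc a j, q i|) (mem_Icc.mpr hjIcc)
    rwa [hFj, abs_of_nonneg hP0] at this
  rw [← hPhalf]
  exact le_antisymm (Finset.sup'_le _ _ hupper) hlow

theorem stmt12 (a b : ℕ) (hab : a ≤ b) (p : ℕ → ℝ)
    (hp0 : ∀ i, 0 ≤ p i) (hp1 : ∑ i ∈ Finset.Icc a b, p i = 1)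
    (hmono : (∀ i, a ≤ i → i < b → p (i+1) ≤ p i) ∨ (∀ i, a ≤ i → i < b → p i ≤ p (i+1))) :
    (Finset.Icc a b).sup' (Finset.nonempty_Icc.mpr hab)
        (fun j => |(∑ i ∈ Finset.Icc a j, p i) -
          ((Finset.Icc a j).card : ℝ) / ((Finset.Icc a b).card : ℝ)|) =
      (1/2) * ∑ i ∈ Finset.Icc a b, |p i - 1 / ((Finset.Icc a b).card : ℝ)| := by
  have habne : (Icc a b).Nonempty := nonempty_Icc.mpr hab
  have hn : (0:ℝ) < ((Icc a b).card : ℝ) := by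
    exact_mod_cast Finset.card_pos.mpr habne
  set n : ℝ := ((Icc a b).card : ℝ) with hnd
  set q : ℕ → ℝ := fun i => p i - 1/n with hq
  have hsumq : ∑ i ∈ Icc a b, q i = 0 := by
    rw [hq]
    simp only [Finset.sum_sub_distrib, hp1, Finset.sum_const, nsmul_eq_mul]
    rw [← hnd]
    field_simp
    norm_num
  have hF : ∀ j, (∑ i ∈ Icc a j, p i) - ((Icc a j).card : ℝ) / n
      = ∑ i ∈ Icc a j, q i := by
    intro j
    rw [hq]
    rw [Finset.sum_sub_distrib, Finset.sum_const, nsmul_eq_mul]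
    ring
  have hgoal1 : (Icc a b).sup' habne
        (fun j => |(∑ i ∈ Icc a j, p i) - ((Icc a j).card : ℝ) / n|)
      = (Icc a b).sup' habne (fun j => |∑ i ∈ Icc a j, q i|) := by
    apply Finset.sup'_congr habne rfl
    intro j _
    rw [hF]
  rw [hgoal1]
  have hqabs : ∀ i, |p i - 1/n| = |q i| := fun i => rfl
  simp_rw [hqabs]
  rcases hmono with h | h
  · exact key a b hab q hsumq (step_mono (fun i h1 h2 => by
      simp only [hq]; have := h i h1 h2; linarith))
  · have hkey := key a b hab (fun i => -(q i)) (by rw [Finset.sum_neg_distrib, hsumq, neg_zero])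
      (step_mono (fun i h1 h2 => by
        simp only [hq, neg_sub]; have := h i h1 h2; linarith))
    simp only [Finset.sum_neg_distrib, abs_neg] at hkey
    exact hkey
end

section
/- Fix ε > 0 and 0 < p_min ≤ p_max. Let p be a distribution on {1,...,n} with p_min ≤ p(i) ≤ p_max for all i. Let c = 1 + ⌈log_{1+ε} p_max − log_{1+ε} p_min⌉ and let q be the distribution on {1,...,c} with q(j) = (1+ε)^{j−1}·ε/((1+ε)^c − 1). Define f on {1,...,cn} by f(c(i−1)+j) = p(i)q(j). Then f is a probability distribution and satisfies f(i)/f(i−1) ≤ 1+ε for all i > 1. -/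
open Finset

theorem stmt13 (n : ℕ) (hn : 0 < n) (ε pmin pmax : ℝ)
    (hε : 0 < ε) (hmin : 0 < pmin) (hmm : pmin ≤ pmax)
    (p : ℕ → ℝ) (hp0 : ∀ i, 0 ≤ p i)
    (hp1 : ∑ i ∈ Finset.Icc 1 n, p i = 1)
    (hbounds : ∀ i ∈ Finset.Icc 1 n, pmin ≤ p i ∧ p i ≤ pmax) :
    let c : ℕ := 1 + ⌈(Real.log pmax - Real.log pmin) / Real.log (1+ε)⌉₊
    let q : ℕ → ℝ := fun j => (1+ε)^(j-1) * ε / ((1+ε)^c - 1)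
    let f : ℕ → ℝ := fun t => p ((t-1)/c + 1) * q ((t-1) % c + 1)
    ((∑ j ∈ Finset.Icc 1 c, q j = 1) ∧ ∑ t ∈ Finset.Icc 1 (c*n), f t = 1) ∧
      ∀ t, 2 ≤ t → t ≤ c*n → f t / f (t-1) ≤ 1 + ε := by
  intro c q f
  have h1ε : (1:ℝ) < 1 + ε := by linarith
  have hc0 : 0 < c := Nat.succ_le_iff.mp (Nat.le_add_right 1 _)
  have hpowpos : ∀ k : ℕ, (0:ℝ) < (1+ε)^k := fun k => pow_pos (by linarith) k
  have hden : (0:ℝ) < (1+ε)^c - 1 := by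
    have : (1:ℝ) < (1+ε)^c := one_lt_pow₀ h1ε hc0.ne'
    linarith
  have hqpos : ∀ j, 0 < q j := by
    intro j
    exact div_pos (mul_pos (hpowpos _) hε) hden
  -- sum of q
  have hq1 : ∑ j ∈ Finset.Icc 1 c, q j = 1 := by
    have h1 : ∑ j ∈ Finset.Icc 1 c, q j = ∑ j ∈ Finset.range c, q (1 + j) := by
      rw [← Finset.Ico_add_one_right_eq_Icc, Finset.sum_Ico_eq_sum_range]
      simp
    rw [h1]
    have h2 : ∑ j ∈ Finset.range c, q (1 + j) = (∑ j ∈ Finset.range c, (1+ε)^j) * ε / ((1+ε)^c - 1) := by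
      rw [Finset.sum_mul, Finset.sum_div]
      apply Finset.sum_congr rfl
      intro j _
      simp [q]
    rw [h2, geom_sum_eq (ne_of_gt h1ε)]
    field_simp
    rw [add_sub_cancel_left, div_self (ne_of_gt hε)]
  refine ⟨⟨hq1, ?_⟩, ?_⟩
  · -- sum of f
    have hstep : ∑ t ∈ Finset.Icc 1 (c*n), f t = ∑ t ∈ Finset.range (c*n), p (t/c + 1) * q (t % c + 1) := by
      rw [← Finset.Ico_add_one_right_eq_Icc, Finset.sum_Ico_eq_sum_range]
      apply Finset.sum_congr (by simp)
      intro t _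
      simp [f, Nat.add_sub_cancel_left]
    rw [hstep]
    have hbij : ∑ t ∈ Finset.range (c*n), p (t/c + 1) * q (t % c + 1)
        = ∑ x ∈ Finset.range n ×ˢ Finset.range c, p (x.1 + 1) * q (x.2 + 1) := by
      apply Finset.sum_nbij' (i := fun t => (t/c, t%c)) (j := fun x => c*x.1 + x.2)
      · intro t ht
        simp only [Finset.mem_range, Finset.mem_product] at *
        refine ⟨?_, Nat.mod_lt _ hc0⟩
        exact Nat.div_lt_of_lt_mul ht
      · intro x hx
        simp only [Finset.mem_range, Finset.mem_product] at *
        calc c * x.1 + x.2 < c * x.1 + c := by omega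
          _ = c * (x.1 + 1) := by ring
          _ ≤ c * n := Nat.mul_le_mul_left c hx.1
      · intro t _; exact Nat.div_add_mod t c
      · intro x hx
        simp only [Finset.mem_range, Finset.mem_product] at hx
        have h1 : (c * x.1 + x.2) / c = x.1 := by
          rw [Nat.mul_add_div hc0, Nat.div_eq_of_lt hx.2, add_zero]
        have h2 : (c * x.1 + x.2) % c = x.2 := by
          rw [Nat.mul_add_mod, Nat.mod_eq_of_lt hx.2]
        exact Prod.ext h1 h2
      · intro t _; rfl
    rw [hbij, Finset.sum_product]
    have hinner : ∀ a ∈ Finset.range n, ∑ b ∈ Finset.range c, p (a+1) * q (b+1) = p (a+1) := by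
      intro a _
      rw [← Finset.mul_sum]
      have : ∑ b ∈ Finset.range c, q (b+1) = 1 := by
        rw [← hq1, ← Finset.Ico_add_one_right_eq_Icc, Finset.sum_Ico_eq_sum_range]
        apply Finset.sum_congr (by simp)
        intro b _; rw [add_comm]
      rw [this, mul_one]
    rw [Finset.sum_congr rfl hinner]
    rw [← hp1, ← Finset.Ico_add_one_right_eq_Icc, Finset.sum_Ico_eq_sum_range]
    apply Finset.sum_congr (by simp)
    intro a _; rw [add_comm]
  · -- ratio bound
    intro t ht2 htn
    have hlog : 0 < Real.log (1+ε) := Real.log_pos h1ε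
    have hkey : pmax ≤ pmin * (1+ε)^(c-1) := by
      have hc1 : (c - 1 : ℕ) = ⌈(Real.log pmax - Real.log pmin) / Real.log (1+ε)⌉₊ := by
        simp [c]
      have hle : (Real.log pmax - Real.log pmin) / Real.log (1+ε) ≤ (c-1 : ℕ) := by
        rw [hc1]; exact Nat.le_ceil _
      have h2 : Real.log pmax - Real.log pmin ≤ (c-1:ℕ) * Real.log (1+ε) := by
        rw [div_le_iff₀ hlog] at hle; linarith
      have h3 : Real.log pmax ≤ Real.log (pmin * (1+ε)^(c-1)) := by
        rw [Real.log_mul (ne_of_gt hmin) (ne_of_gt (hpowpos _)), Real.log_pow]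
        linarith
      have h4 := Real.exp_le_exp.mpr h3
      rwa [Real.exp_log (lt_of_lt_of_le hmin hmm),
        Real.exp_log (mul_pos hmin (hpowpos _))] at h4
    obtain ⟨a, b, hbc, hab⟩ : ∃ a b, b < c ∧ t - 2 = c * a + b :=
      ⟨(t-2)/c, (t-2)%c, Nat.mod_lt _ hc0, (Nat.div_add_mod _ c).symm⟩
    have ht1 : t - 1 = c * a + b + 1 := by omega
    have hcn : 0 < c * n := Nat.mul_pos hc0 hn
    have hpmem : ∀ i, 1 ≤ i → i ≤ n → pmin ≤ p i ∧ p i ≤ pmax := by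
      intro i h1 h2; exact hbounds i (Finset.mem_Icc.mpr ⟨h1, h2⟩)
    have han : a + 1 ≤ n := by
      have h1 : c * a + b < c * n := by omega
      by_contra h
      have h2 : c * n ≤ c * a := Nat.mul_le_mul_left c (by omega)
      omega
    have hpa : pmin ≤ p (a+1) ∧ p (a+1) ≤ pmax := hpmem _ (by omega) han
    have hppos : 0 < p (a+1) := lt_of_lt_of_le hmin hpa.1
    have hdiv' : (t-1-1)/c = a := by
      have e : t-1-1 = c*a+b := by omega
      rw [e, Nat.mul_add_div hc0, Nat.div_eq_of_lt hbc, add_zero]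
    have hmod' : (t-1-1)%c = b := by
      have e : t-1-1 = c*a+b := by omega
      rw [e, Nat.mul_add_mod, Nat.mod_eq_of_lt hbc]
    by_cases hcase : b + 1 < c
    · -- inside a block
      have hdiv : (t-1)/c = a := by
        rw [ht1, add_assoc, Nat.mul_add_div hc0, Nat.div_eq_of_lt hcase, add_zero]
      have hmod : (t-1)%c = b+1 := by
        rw [ht1, add_assoc, Nat.mul_add_mod, Nat.mod_eq_of_lt hcase]
      show f t / f (t-1) ≤ 1 + ε
      simp only [f, hdiv, hmod, hdiv', hmod', q]
      have e1 : (b + 1 + 1 - 1 : ℕ) = b + 1 := by omega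
      have e2 : (b + 1 - 1 : ℕ) = b := by omega
      rw [e1, e2]
      have hX : p (a+1) * ((1+ε)^b * ε / ((1+ε)^c - 1)) ≠ 0 :=
        ne_of_gt (mul_pos hppos (div_pos (mul_pos (hpowpos _) hε) hden))
      have heq : p (a+1) * ((1+ε)^(b+1) * ε / ((1+ε)^c - 1)) =
          (1+ε) * (p (a+1) * ((1+ε)^b * ε / ((1+ε)^c - 1))) := by
        rw [pow_succ]; ring
      rw [heq, mul_div_assoc, div_self hX, mul_one]
    · -- block boundary
      have hbceq : b + 1 = c := by omega
      have hms : c * (a+1) = c * a + c := by ring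
      have ht1' : t - 1 = c * (a+1) := by omega
      have hdiv : (t-1)/c = a+1 := by rw [ht1', Nat.mul_div_cancel_left _ hc0]
      have hmod : (t-1)%c = 0 := by rw [ht1', Nat.mul_mod_right]
      have han2 : a + 2 ≤ n := by
        have h1 : c * (a+1) < c * n := by omega
        have h2 := Nat.lt_of_mul_lt_mul_left h1
        omega
      have hpa2 : pmin ≤ p (a+2) ∧ p (a+2) ≤ pmax := hpmem _ (by omega) han2
      have hidx : a + 1 + 1 = a + 2 := by omega
      have hr : p (a+1+1) ≤ p (a+1) * (1+ε)^(c-1) := by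
        rw [hidx]
        calc p (a+2) ≤ pmax := hpa2.2
          _ ≤ pmin * (1+ε)^(c-1) := hkey
          _ ≤ p (a+1) * (1+ε)^(c-1) :=
              mul_le_mul_of_nonneg_right hpa.1 (le_of_lt (hpowpos _))
      show f t / f (t-1) ≤ 1 + ε
      simp only [f, hdiv, hmod, hdiv', hmod', q]
      have e1 : (0 + 1 - 1 : ℕ) = 0 := rfl
      have e2 : (b + 1 - 1 : ℕ) = b := by omega
      rw [e1, e2, pow_zero, one_mul]
      have hfpos : 0 < p (a+1) * ((1+ε)^b * ε / ((1+ε)^c - 1)) :=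
        mul_pos hppos (div_pos (mul_pos (hpowpos _) hε) hden)
      rw [div_le_iff₀ hfpos]
      have heq : (1+ε) * (p (a+1) * ((1+ε)^b * ε / ((1+ε)^c - 1)))
          = ((1+ε) * (p (a+1) * (1+ε)^b)) * (ε / ((1+ε)^c - 1)) := by ring
      rw [heq]
      apply mul_le_mul_of_nonneg_right _ (le_of_lt (div_pos hε hden))
      have hb1 : b = c - 1 := by omega
      rw [hb1]
      nlinarith [hr, mul_pos hppos (hpowpos (c-1)), hε]
end

section
/- Let f be a distribution on {1,...,m} with f(i)/f(i−1) ≤ 1+ε for all i > 1. Let r = ⌈m⌉ (i.e., k=1), define a_1 = 1 and a_i = ⌈(1+ε)a_{i−1}⌉ for i ≥ 2, and define g by spreading the mass f(i) uniformly over a block of a_i consecutive new domain elements, with blocks placed consecutively in order of i. Then g is a non-increasing probability distribution. -/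
open Finset

/-- The sequence `a_1 = 1`, `a_{i+1} = ⌈(1+ε)·a_i⌉` (1-indexed; `aseq ε 0` is junk). -/
noncomputable def aseq (ε : ℝ) : ℕ → ℕ
  | 0 => 1
  | 1 => 1
  | (i+2) => ⌈(1+ε) * (aseq ε (i+1) : ℝ)⌉₊

/-- `asum ε i = a_1 + ⋯ + a_i`. -/
noncomputable def asum (ε : ℝ) (i : ℕ) : ℕ := ∑ ℓ ∈ Finset.Icc 1 i, aseq ε ℓ

/-- The index of the block containing the new domain element `j`: the smallest `i` with
`j ≤ a_1 + ⋯ + a_i`. -/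
noncomputable def gidx (ε : ℝ) (j : ℕ) : ℕ := sInf {i | j ≤ asum ε i}

lemma aseq_pos (ε : ℝ) (hε : 0 ≤ ε) : ∀ i, 0 < aseq ε i
  | 0 => one_pos
  | 1 => one_pos
  | (i+2) => by
      have h := aseq_pos ε hε (i+1)
      have h' : (0:ℝ) < (aseq ε (i+1) : ℝ) := by exact_mod_cast h
      have : (0:ℝ) < (1+ε) * (aseq ε (i+1) : ℝ) := by nlinarith
      simpa [aseq] using Nat.ceil_pos.2 this

lemma aseq_ge (ε : ℝ) (i : ℕ) (hi : 1 ≤ i) :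
    (1+ε) * (aseq ε i : ℝ) ≤ (aseq ε (i+1) : ℝ) := by
  rcases i with _ | k
  · omega
  · simpa [aseq] using Nat.le_ceil ((1+ε) * (aseq ε (k+1) : ℝ))

lemma asum_zero (ε : ℝ) : asum ε 0 = 0 := by simp [asum]

lemma asum_succ (ε : ℝ) (i : ℕ) : asum ε (i+1) = asum ε i + aseq ε (i+1) := by
  rw [asum, asum, Finset.sum_Icc_succ_top (Nat.succ_le_succ (Nat.zero_le i))]

lemma asum_lt (ε : ℝ) (hε : 0 ≤ ε) (i : ℕ) : asum ε i < asum ε (i+1) := by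
  rw [asum_succ]
  exact Nat.lt_add_of_pos_right (aseq_pos ε hε (i+1))

lemma asum_mono (ε : ℝ) {i k : ℕ} (h : i ≤ k) : asum ε i ≤ asum ε k := by
  exact Finset.sum_le_sum_of_subset (Finset.Icc_subset_Icc_right h)

lemma le_asum (ε : ℝ) (hε : 0 ≤ ε) (j : ℕ) : j ≤ asum ε j := by
  induction j with
  | zero => simp [asum_zero]
  | succ j ih =>
      have := aseq_pos ε hε (j+1)
      rw [asum_succ]; omega

lemma gidx_eq (ε : ℝ) (hε : 0 ≤ ε) (i j : ℕ) (h1 : asum ε i < j) (h2 : j ≤ asum ε (i+1)) :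
    gidx ε j = i + 1 := by
  have hmem : (i+1) ∈ {n | j ≤ asum ε n} := h2
  refine le_antisymm (Nat.sInf_le hmem) ?_
  by_contra h
  push_neg at h
  have hk : gidx ε j ∈ {n | j ≤ asum ε n} := Nat.sInf_mem ⟨_, hmem⟩
  have hle : asum ε (gidx ε j) ≤ asum ε i := asum_mono ε (Nat.lt_succ_iff.1 h)
  exact absurd (le_trans hk hle) (not_le.2 h1)

lemma sum_g (ε : ℝ) (hε : 0 ≤ ε) (f : ℕ → ℝ) (M : ℕ) :
    ∑ j ∈ Finset.Icc 1 (asum ε M), f (gidx ε j) / (aseq ε (gidx ε j) : ℝ)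
      = ∑ i ∈ Finset.Icc 1 M, f i := by
  induction M with
  | zero => simp [asum_zero]
  | succ M ih =>
      have hmono : asum ε M ≤ asum ε (M+1) := le_of_lt (asum_lt ε hε M)
      have hsplit := Finset.sum_Ioc_consecutive
        (fun j => f (gidx ε j) / (aseq ε (gidx ε j) : ℝ))
        (Nat.zero_le (asum ε M)) hmono
      have hIcc : ∀ n : ℕ, Finset.Icc 1 n = Finset.Ioc 0 n := by
        intro n; ext x; simp [Nat.lt_iff_add_one_le]
      have hblock : ∑ j ∈ Finset.Ioc (asum ε M) (asum ε (M+1)),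
          f (gidx ε j) / (aseq ε (gidx ε j) : ℝ) = f (M+1) := by
        have hcongr : ∑ j ∈ Finset.Ioc (asum ε M) (asum ε (M+1)),
            f (gidx ε j) / (aseq ε (gidx ε j) : ℝ)
            = ∑ _j ∈ Finset.Ioc (asum ε M) (asum ε (M+1)),
              f (M+1) / (aseq ε (M+1) : ℝ) := by
          refine Finset.sum_congr rfl ?_
          intro j hj
          rw [gidx_eq ε hε M j (Finset.mem_Ioc.1 hj).1 (Finset.mem_Ioc.1 hj).2]
        rw [hcongr, Finset.sum_const, Nat.card_Ioc, asum_succ]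
        have ha : aseq ε (M+1) ≠ 0 := (aseq_pos ε hε (M+1)).ne'
        have ha' : (aseq ε (M+1) : ℝ) ≠ 0 := Nat.cast_ne_zero.2 ha
        rw [Nat.add_sub_cancel_left, nsmul_eq_mul]
        field_simp
      rw [hIcc, ← hsplit, ← hIcc, ih, hblock,
        Finset.sum_Icc_succ_top (Nat.succ_le_succ (Nat.zero_le M))]

theorem stmt14 (m : ℕ) (hm : 1 ≤ m) (ε : ℝ) (hε : 0 < ε)
    (f : ℕ → ℝ) (hf0 : ∀ i, 0 ≤ f i) (hf1 : ∑ i ∈ Finset.Icc 1 m, f i = 1)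
    (hratio : ∀ i, 2 ≤ i → i ≤ m → f i ≤ (1+ε) * f (i-1)) :
    let g : ℕ → ℝ := fun j => f (gidx ε j) / (aseq ε (gidx ε j) : ℝ)
    let N : ℕ := asum ε m
    (∀ j, 0 ≤ g j) ∧ (∑ j ∈ Finset.Icc 1 N, g j = 1) ∧
      ∀ j, 1 ≤ j → j < N → g (j+1) ≤ g j := by
  intro g N
  have hε' : (0:ℝ) ≤ ε := le_of_lt hε
  refine ⟨?_, ?_, ?_⟩
  · intro j
    exact div_nonneg (hf0 _) (Nat.cast_nonneg _)
  · rw [show (∑ j ∈ Finset.Icc 1 N, g j)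
      = ∑ j ∈ Finset.Icc 1 (asum ε m), f (gidx ε j) / (aseq ε (gidx ε j) : ℝ) from rfl,
      sum_g ε hε' f m, hf1]
  · intro j hj hjN
    set i := gidx ε j with hi
    have hne : (j ≤ asum ε j) := le_asum ε hε' j
    have hmemset : j ∈ {n | j ≤ asum ε n} := hne
    have hjle : j ≤ asum ε i := Nat.sInf_mem ⟨_, hmemset⟩
    have hi1 : 1 ≤ i := by
      by_contra h
      push_neg at h
      interval_cases i
      · rw [asum_zero] at hjle; omega
    have hlt : asum ε (i-1) < j := by
      by_contra h
      push_neg at h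
      have h2 : gidx ε j ≤ i - 1 := Nat.sInf_le h
      omega
    by_cases hcase : j + 1 ≤ asum ε i
    · -- same block
      have : gidx ε (j+1) = i := by
        have := gidx_eq ε hε' (i-1) (j+1) (by omega) (by rwa [Nat.sub_add_cancel hi1])
        omega
      simp only [g, this, ← hi]
      exact le_rfl
    · -- j = asum ε i, next block
      have hje : j = asum ε i := by omega
      have h2 : j + 1 ≤ asum ε (i+1) := by
        have := asum_lt ε hε' i
        omega
      have hg1 : gidx ε (j+1) = i + 1 := gidx_eq ε hε' i (j+1) (by omega) h2
      have him : i + 1 ≤ m := by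
        by_contra h
        push_neg at h
        have : asum ε m ≤ asum ε i := asum_mono ε (by omega)
        omega
      have hfr : f (i+1) ≤ (1+ε) * f i := by
        have := hratio (i+1) (by omega) him
        simpa using this
      have ha : (1+ε) * (aseq ε i : ℝ) ≤ (aseq ε (i+1) : ℝ) := aseq_ge ε i hi1
      have hapos : (0:ℝ) < (aseq ε i : ℝ) := by
        exact_mod_cast aseq_pos ε hε' i
      have h1ε : (0:ℝ) < 1 + ε := by linarith
      have key : f (i+1) / (aseq ε (i+1) : ℝ) ≤ f i / (aseq ε i : ℝ) := by
        have := div_le_div₀ (mul_nonneg (le_of_lt h1ε) (hf0 i)) hfr (by positivity) ha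
        rwa [mul_div_mul_left _ _ (ne_of_gt h1ε)] at this
      simp only [g, hg1, ← hi]
      exact key
end

section
/- With a_1 = 1, b_1 = ⌈1/ε⌉, a_i = ⌈(1+ε)a_{i−1}⌉ and b_i = ⌈(1+ε)b_{i−1}⌉ for i ≥ 2 and 0 < ε ≤ 1/2: (i) a_i ≤ b_i for all i; (ii) b_{i+1} ≤ (1+2ε)b_i for all i; (iii) Σ_{i=1}^m a_i ≤ (1+2ε)^{m+1}/(2ε²). -/
open Finset

/-- `b_1 = ⌈1/ε⌉`, `b_{i+1} = ⌈(1+ε)·b_i⌉` (1-indexed; value at `0` is junk). -/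
noncomputable def bseq (ε : ℝ) : ℕ → ℕ
  | 0 => ⌈1/ε⌉₊
  | 1 => ⌈1/ε⌉₊
  | (i+2) => ⌈(1+ε) * (bseq ε (i+1) : ℝ)⌉₊

theorem stmt16 (ε : ℝ) (hε0 : 0 < ε) (hε : ε ≤ 1/2) :
    (∀ i, 1 ≤ i → aseq ε i ≤ bseq ε i) ∧
    (∀ i, 1 ≤ i → (bseq ε (i+1) : ℝ) ≤ (1 + 2*ε) * (bseq ε i : ℝ)) ∧
    (∀ m, 1 ≤ m → (∑ i ∈ Finset.Icc 1 m, (aseq ε i : ℝ)) ≤ (1 + 2*ε)^(m+1) / (2 * ε^2)) := by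
  have hεinv : (0:ℝ) < 1/ε := by positivity
  have hb2 : ∀ k, bseq ε (k+2) = ⌈(1+ε) * (bseq ε (k+1) : ℝ)⌉₊ := fun k => rfl
  have ha2 : ∀ k, aseq ε (k+2) = ⌈(1+ε) * (aseq ε (k+1) : ℝ)⌉₊ := fun k => rfl
  -- b_{j+1} ≥ 1/ε
  have hb_ge : ∀ j, 1/ε ≤ (bseq ε (j+1) : ℝ) := by
    intro j
    induction j with
    | zero => simpa [bseq] using Nat.le_ceil (1/ε)
    | succ k ih =>
      rw [hb2 k]
      have hbnn : (0:ℝ) ≤ (bseq ε (k+1) : ℝ) := Nat.cast_nonneg _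
      calc 1/ε ≤ (bseq ε (k+1) : ℝ) := ih
        _ ≤ (1+ε) * (bseq ε (k+1) : ℝ) := by nlinarith
        _ ≤ _ := Nat.le_ceil _
  -- part (i)
  have part1 : ∀ j, aseq ε (j+1) ≤ bseq ε (j+1) := by
    intro j
    induction j with
    | zero =>
      show 1 ≤ ⌈1/ε⌉₊
      exact Nat.one_le_ceil_iff.mpr hεinv
    | succ k ih =>
      rw [ha2 k, hb2 k]
      exact Nat.ceil_le_ceil
        (mul_le_mul_of_nonneg_left (Nat.cast_le.mpr ih) (by linarith))
  -- part (ii)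
  have part2 : ∀ j, (bseq ε (j+2) : ℝ) ≤ (1 + 2*ε) * (bseq ε (j+1) : ℝ) := by
    intro j
    have hb := hb_ge j
    have h1 : (1:ℝ) ≤ (bseq ε (j+1) : ℝ) * ε := (div_le_iff₀ hε0).mp hb
    have hnn : (0:ℝ) ≤ (1+ε) * (bseq ε (j+1) : ℝ) := by nlinarith
    have hceil := Nat.ceil_lt_add_one hnn
    rw [hb2 j]
    nlinarith [hceil]
  -- b_{j+1} ≤ (1+2ε)^j * b_1
  have hbpow : ∀ j, (bseq ε (j+1) : ℝ) ≤ (1+2*ε)^j * (bseq ε 1 : ℝ) := by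
    intro j
    induction j with
    | zero => simp
    | succ k ih =>
      calc (bseq ε (k+2) : ℝ) ≤ (1 + 2*ε) * (bseq ε (k+1) : ℝ) := part2 k
        _ ≤ (1 + 2*ε) * ((1+2*ε)^k * (bseq ε 1 : ℝ)) := by
            apply mul_le_mul_of_nonneg_left ih (by linarith)
        _ = (1+2*ε)^(k+1) * (bseq ε 1 : ℝ) := by ring
  refine ⟨?_, ?_, ?_⟩
  · intro i hi
    cases i with
    | zero => omega
    | succ j => exact part1 j
  · intro i hi
    cases i with
    | zero => omega
    | succ j => exact part2 j
  · intro m hm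
    have hsum : (∑ i ∈ Finset.Icc 1 m, (aseq ε i : ℝ)) =
        ∑ j ∈ Finset.range m, (aseq ε (1+j) : ℝ) := by
      rw [← Finset.Ico_add_one_right_eq_Icc, Finset.sum_Ico_eq_sum_range]
      simp
    have hbound : (∑ j ∈ Finset.range m, (aseq ε (1+j) : ℝ)) ≤
        ∑ j ∈ Finset.range m, (1+2*ε)^j * (bseq ε 1 : ℝ) := by
      apply Finset.sum_le_sum
      intro j _
      calc (aseq ε (1+j) : ℝ) = (aseq ε (j+1) : ℝ) := by rw [add_comm]
        _ ≤ (bseq ε (j+1) : ℝ) := Nat.cast_le.mpr (part1 j)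
        _ ≤ (1+2*ε)^j * (bseq ε 1 : ℝ) := hbpow j
    have hgeom : (∑ j ∈ Finset.range m, (1+2*ε)^j * (bseq ε 1 : ℝ)) =
        ((1+2*ε)^m - 1) / (2*ε) * (bseq ε 1 : ℝ) := by
      rw [← Finset.sum_mul, geom_sum_eq (by intro h; nlinarith [h])]
      ring_nf
    have hb1 : (bseq ε 1 : ℝ) < 1/ε + 1 := by
      simpa [bseq] using Nat.ceil_lt_add_one hεinv.le
    have hb1' : (bseq ε 1 : ℝ) * ε ≤ 1 + 2*ε := by
      have := (mul_lt_mul_of_pos_right hb1 hε0)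
      have h2 : (1/ε + 1) * ε = 1 + ε := by field_simp
      nlinarith
    have hP : (1:ℝ) ≤ (1+2*ε)^m := one_le_pow₀ (by linarith)
    have hfinal : ((1+2*ε)^m - 1) / (2*ε) * (bseq ε 1 : ℝ) ≤ (1+2*ε)^(m+1) / (2*ε^2) := by
      rw [div_mul_eq_mul_div, div_le_div_iff₀ (by positivity) (by positivity)]
      have hb1nn : (0:ℝ) ≤ (bseq ε 1 : ℝ) := Nat.cast_nonneg _
      have key : ((1+2*ε)^m - 1) * ((bseq ε 1 : ℝ) * ε) ≤ ((1+2*ε)^m - 1) * (1 + 2*ε) :=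
        mul_le_mul_of_nonneg_left hb1' (by linarith)
      have hpow : (1+2*ε)^(m+1) = (1+2*ε)^m * (1+2*ε) := by ring
      nlinarith [key, hP, mul_pos hε0 hε0, sq_nonneg ε]
    calc (∑ i ∈ Finset.Icc 1 m, (aseq ε i : ℝ)) ≤
        ((1+2*ε)^m - 1) / (2*ε) * (bseq ε 1 : ℝ) := by rw [hsum, ← hgeom]; exact hbound
      _ ≤ (1+2*ε)^(m+1) / (2*ε^2) := hfinal
end

section
/- Let p be a k-modal distribution over {1,...,n} and suppose the domain is partitioned into intervals such that at the right endpoint b of each 'negligible' interval's successor, p(b) ≥ 199ε/(10000k) while p of the element immediately preceding b is at most 101ε/(10000k). Then the number of such points b is at most ⌈(k+1)/2⌉ ≤ k. -/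
open Finset

/-- `[a,b] ⊆ [2, n-1]` is a max-interval of `p`: `p` is constant `= c` on it and both
neighboring values are strictly smaller. -/
def IsMaxInterval (p : ℕ → ℝ) (n a b : ℕ) : Prop :=
  2 ≤ a ∧ a ≤ b ∧ b + 1 ≤ n ∧
    ∃ c, (∀ i ∈ Finset.Icc a b, p i = c) ∧ p (a-1) < c ∧ p (b+1) < c

/-- `[a,b] ⊆ [2, n-1]` is a min-interval of `p`: `p` is constant `= c` on it and both
neighboring values are strictly larger. -/
def IsMinInterval (p : ℕ → ℝ) (n a b : ℕ) : Prop :=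
  2 ≤ a ∧ a ≤ b ∧ b + 1 ≤ n ∧
    ∃ c, (∀ i ∈ Finset.Icc a b, p i = c) ∧ c < p (a-1) ∧ c < p (b+1)

open scoped Classical in
/-- `p` (viewed as a distribution on `{1,…,n}`) is `k`-modal: it has at most `k`
max-intervals and min-intervals in total. -/
def KModal (p : ℕ → ℝ) (n k : ℕ) : Prop :=
  ((Finset.Icc 1 n ×ˢ Finset.Icc 1 n).filter
      (fun ab => IsMaxInterval p n ab.1 ab.2 ∨ IsMinInterval p n ab.1 ab.2)).card ≤ k

lemma exists_descent (p : ℕ → ℝ) (x y : ℕ) (hxy : x ≤ y) (h : p y < p x) :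
    ∃ i, x ≤ i ∧ i < y ∧ p (i+1) < p i := by
  by_contra hc
  push_neg at hc
  have key : ∀ j, x ≤ j → j ≤ y → p x ≤ p j := by
    intro j hj1 hj2
    induction j, hj1 using Nat.le_induction with
    | base => exact le_rfl
    | succ m hm ih =>
      exact (ih (by omega)).trans (hc m hm (by omega))
  exact absurd (key y hxy le_rfl) (not_le.mpr h)

lemma exists_maxInterval (p : ℕ → ℝ) (n x y : ℕ) (hx : 2 ≤ x) (hxy : x ≤ y)
    (hyn : y + 1 ≤ n) (hasc : p (x-1) < p x) (hdesc : p (y+1) < p y) :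
    ∃ a b, x ≤ a ∧ a ≤ b ∧ b ≤ y ∧ IsMaxInterval p n a b := by
  classical
  have hne : (Finset.Icc x y).Nonempty := ⟨x, by simp [hxy]⟩
  set M := (Finset.Icc x y).sup' hne p with hM
  obtain ⟨i0, hi0, hpi0⟩ := Finset.exists_mem_eq_sup' hne p
  have hle : ∀ i ∈ Finset.Icc x y, p i ≤ M := fun i hi => Finset.le_sup' p hi
  set T := (Finset.Icc x y).filter (fun i => p i = M) with hT
  have hTne : T.Nonempty := ⟨i0, by simp [hT, hi0, hpi0.symm, hM]⟩
  set b := T.max' hTne with hb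
  have hbT : b ∈ T := T.max'_mem hTne
  have hbIcc : b ∈ Finset.Icc x y := (Finset.mem_filter.mp hbT).1
  have hpb : p b = M := (Finset.mem_filter.mp hbT).2
  obtain ⟨hxb, hby⟩ := Finset.mem_Icc.mp hbIcc
  have hb1 : p (b+1) < M := by
    rcases eq_or_lt_of_le hby with h | h
    · rw [h]
      calc p (y+1) < p y := hdesc
        _ ≤ M := hle y (by simp [hxy])
    · have hmem : b + 1 ∈ Finset.Icc x y := by simp; omega
      rcases lt_or_eq_of_le (hle _ hmem) with h' | h'
      · exact h'
      · exfalso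
        have hmt : b + 1 ∈ T := Finset.mem_filter.mpr ⟨hmem, h'⟩
        have := Finset.le_max' T _ hmt
        omega
  set A := (Finset.Icc x b).filter (fun a => ∀ i ∈ Finset.Icc a b, p i = M) with hA
  have hbA : b ∈ A := by
    refine Finset.mem_filter.mpr ⟨by simp [hxb], ?_⟩
    intro i hi
    simp only [Finset.mem_Icc] at hi
    have : i = b := by omega
    rw [this]; exact hpb
  have hAne : A.Nonempty := ⟨b, hbA⟩
  set a := A.min' hAne with ha
  have haA : a ∈ A := A.min'_mem hAne
  obtain ⟨haIcc, hconst⟩ := Finset.mem_filter.mp haA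
  obtain ⟨hxa, hab⟩ := Finset.mem_Icc.mp haIcc
  have ha1 : p (a-1) < M := by
    rcases eq_or_lt_of_le hxa with h | h
    · rw [← h]
      exact hasc.trans_le (hle x (by simp [hxy]))
    · have hmem : a - 1 ∈ Finset.Icc x y := by simp; omega
      rcases lt_or_eq_of_le (hle _ hmem) with h' | h'
      · exact h'
      · exfalso
        have hma : a - 1 ∈ A := by
          refine Finset.mem_filter.mpr ⟨by simp; omega, ?_⟩
          intro i hi
          simp only [Finset.mem_Icc] at hi
          rcases Nat.eq_or_lt_of_le hi.1 with h2 | h2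
          · rw [← h2]; exact h'
          · exact hconst i (by simp; omega)
        have := Finset.min'_le A _ hma
        omega
  exact ⟨a, b, hxa, hab, hby, by omega, hab, by omega, M, hconst, ha1, hb1⟩

lemma min_of_neg_max (p : ℕ → ℝ) (n a b : ℕ)
    (h : IsMaxInterval (fun i => -p i) n a b) : IsMinInterval p n a b := by
  obtain ⟨h1, h2, h3, c, hc, hl, hr⟩ := h
  refine ⟨h1, h2, h3, -c, fun i hi => ?_, ?_, ?_⟩
  · have := hc i hi; simp at this; linarith
  · simp at hl; linarith
  · simp at hr; linarith

open scoped Classical in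
theorem stmt17 (n k : ℕ) (hk : 1 ≤ k) (p : ℕ → ℝ)
    (hp0 : ∀ i, 0 ≤ p i) (hp1 : ∑ i ∈ Finset.Icc 1 n, p i = 1)
    (hkm : KModal p n k) (ε : ℝ) (hε : 0 < ε)
    (c1 c2 : ℝ) (hc1 : c1 = 101 * ε / (10000 * k)) (hc2 : c2 = 199 * ε / (10000 * k)) :
    ((Finset.Icc 2 n).filter (fun b => p (b-1) ≤ c1 ∧ c2 ≤ p b)).card ≤ (k+2)/2 ∧
      (k+2)/2 ≤ k := by
  refine ⟨?_, by omega⟩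
  have hkR : (1:ℝ) ≤ (k:ℝ) := by exact_mod_cast hk
  have hk0 : (0:ℝ) < 10000 * k := by nlinarith
  have hc12 : c1 < c2 := by
    rw [hc1, hc2, div_lt_div_iff₀ hk0 hk0]
    nlinarith
  set S := (Finset.Icc 2 n).filter (fun b => p (b-1) ≤ c1 ∧ c2 ≤ p b) with hS
  rw [Nat.le_div_iff_mul_le (by norm_num : 0 < 2)]
  by_cases hJ : S.card ≤ 1
  · omega
  push_neg at hJ
  have hSne : S.Nonempty := Finset.card_pos.mp (by omega)
  have hSmem : ∀ b ∈ S, 2 ≤ b ∧ b ≤ n ∧ p (b-1) ≤ c1 ∧ c2 ≤ p b := by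
    intro b hb
    rw [hS, Finset.mem_filter, Finset.mem_Icc] at hb
    exact ⟨hb.1.1, hb.1.2, hb.2.1, hb.2.2⟩
  set E := S.erase (S.max' hSne) with hE
  have hEcard : E.card = S.card - 1 := Finset.card_erase_of_mem (S.max'_mem hSne)
  have hnxt0 : ∀ b, ∃ b', b ∈ E → b' ∈ S ∧ b < b' ∧ ∀ s ∈ S, b < s → b' ≤ s := by
    intro b
    by_cases hb : b ∈ E
    · have hbS : b ∈ S := Finset.mem_of_mem_erase hb
      have hbm : b ≠ S.max' hSne := Finset.ne_of_mem_erase hb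
      have hblt : b < S.max' hSne := lt_of_le_of_ne (Finset.le_max' _ _ hbS) hbm
      have hne2 : (S.filter (fun s => b < s)).Nonempty :=
        ⟨S.max' hSne, Finset.mem_filter.mpr ⟨S.max'_mem hSne, hblt⟩⟩
      refine ⟨(S.filter (fun s => b < s)).min' hne2, fun _ => ?_⟩
      have h1 := (S.filter (fun s => b < s)).min'_mem hne2
      rw [Finset.mem_filter] at h1
      exact ⟨h1.1, h1.2, fun s hs hbs =>
        Finset.min'_le _ _ (Finset.mem_filter.mpr ⟨hs, hbs⟩)⟩
    · exact ⟨0, fun h => absurd h hb⟩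
  choose nxt hnxt using hnxt0
  have H : ∀ b, ∃ a1 b1 a2 b2, b ∈ E →
      b ≤ a1 ∧ a1 ≤ b1 ∧ b1 < a2 ∧ a2 ≤ b2 ∧ b2 < nxt b ∧
        IsMaxInterval p n a1 b1 ∧ IsMinInterval p n a2 b2 := by
    intro b
    by_cases hb : b ∈ E
    · obtain ⟨hn1, hn2, -⟩ := hnxt b hb
      obtain ⟨hb2, hbn, hbl, hbr⟩ := hSmem b (Finset.mem_of_mem_erase hb)
      obtain ⟨hb2', hbn', hbl', hbr'⟩ := hSmem (nxt b) hn1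
      have hjb : p (b-1) < p b := lt_of_le_of_lt hbl (lt_of_lt_of_le hc12 hbr)
      have hjb' : p (nxt b - 1) < p (nxt b) := lt_of_le_of_lt hbl' (lt_of_lt_of_le hc12 hbr')
      have hdrop : p (nxt b - 1) < p b := lt_of_le_of_lt hbl' (lt_of_lt_of_le hc12 hbr)
      obtain ⟨y0, hy1, hy2, hy3⟩ := exists_descent p b (nxt b - 1) (by omega) hdrop
      obtain ⟨A1, B1, hA1, hAB1, hB1, hmax⟩ :=
        exists_maxInterval p n b y0 hb2 hy1 (by omega) hjb hy3
      have hmin0 : ∃ a2 b2, y0 + 1 ≤ a2 ∧ a2 ≤ b2 ∧ b2 ≤ nxt b - 1 ∧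
          IsMaxInterval (fun i => -p i) n a2 b2 := by
        apply exists_maxInterval (fun i => -p i) n (y0+1) (nxt b - 1) (by omega) (by omega)
          (by omega)
        · simp only [Nat.add_sub_cancel]
          exact neg_lt_neg hy3
        · have hrw : nxt b - 1 + 1 = nxt b := by omega
          rw [hrw]
          exact neg_lt_neg hjb'
      obtain ⟨A2, B2, hA2, hAB2, hB2, hmin⟩ := hmin0
      exact ⟨A1, B1, A2, B2, fun _ => ⟨hA1, hAB1, by omega, hAB2, by omega, hmax,
        min_of_neg_max p n A2 B2 hmin⟩⟩
    · exact ⟨0, 0, 0, 0, fun h => absurd h hb⟩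
  choose a1 b1 a2 b2 hH using H
  set f : ℕ × Bool → ℕ × ℕ :=
    fun x => if x.2 then (a1 x.1, b1 x.1) else (a2 x.1, b2 x.1) with hf
  have hmaps : ∀ x ∈ E ×ˢ (Finset.univ : Finset Bool),
      f x ∈ (Finset.Icc 1 n ×ˢ Finset.Icc 1 n).filter
        (fun ab => IsMaxInterval p n ab.1 ab.2 ∨ IsMinInterval p n ab.1 ab.2) := by
    rintro ⟨b, c⟩ hx
    rw [Finset.mem_product] at hx
    obtain ⟨h1, h2, h3, h4, h5, hmax, hmin⟩ := hH b hx.1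
    obtain ⟨hm1, hm2, hm3, -⟩ := id hmax
    obtain ⟨hn1', hn2', hn3', -⟩ := id hmin
    rw [Finset.mem_filter, Finset.mem_product]
    cases c <;> simp only [hf, if_true, if_false, Bool.false_eq_true, ite_false, ite_true,
      Finset.mem_Icc]
    · exact ⟨⟨⟨by omega, by omega⟩, ⟨by omega, by omega⟩⟩, Or.inr hmin⟩
    · exact ⟨⟨⟨by omega, by omega⟩, ⟨by omega, by omega⟩⟩, Or.inl hmax⟩
  have hwin : ∀ b ∈ E, ∀ c : Bool, b ≤ (f (b, c)).1 ∧ (f (b, c)).1 < nxt b := by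
    intro b hb c
    obtain ⟨h1, h2, h3, h4, h5, -, -⟩ := hH b hb
    cases c <;>
      simp only [hf, Bool.false_eq_true, if_false, if_true] <;> constructor <;> omega
  have hinj : Set.InjOn f ((E ×ˢ (Finset.univ : Finset Bool) : Finset (ℕ × Bool)) : Set (ℕ × Bool)) := by
    rintro ⟨b, c⟩ hx ⟨b', c'⟩ hx' hfe
    rw [Finset.mem_coe, Finset.mem_product] at hx hx'
    have hb := hx.1
    have hb' := hx'.1
    have hbb : b = b' := by
      rcases lt_trichotomy b b' with h | h | h
      · exfalso
        have w1 := (hwin b hb c).2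
        have w2 := (hwin b' hb' c').1
        have hle := (hnxt b hb).2.2 b' (Finset.mem_of_mem_erase hb') h
        rw [hfe] at w1
        omega
      · exact h
      · exfalso
        have w1 := (hwin b' hb' c').2
        have w2 := (hwin b hb c).1
        have hle := (hnxt b' hb').2.2 b (Finset.mem_of_mem_erase hb) h
        rw [← hfe] at w1
        omega
    subst hbb
    have hcc : c = c' := by
      by_contra hne
      obtain ⟨h1, h2, h3, h4, h5, -, -⟩ := hH b hb
      have hne2 : a1 b ≠ a2 b := by omega
      cases c <;> cases c' <;>
        simp only [hf, Bool.false_eq_true, if_false, if_true] at hfe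
      · exact hne rfl
      · exact hne2 (congrArg Prod.fst hfe).symm
      · exact hne2 (congrArg Prod.fst hfe)
      · exact hne rfl
    rw [hcc]
  have hcard := Finset.card_le_card_of_injOn f hmaps hinj
  rw [Finset.card_product, Finset.card_univ, Fintype.card_bool] at hcard
  have hkm' : ((Finset.Icc 1 n ×ˢ Finset.Icc 1 n).filter
      (fun ab => IsMaxInterval p n ab.1 ab.2 ∨ IsMinInterval p n ab.1 ab.2)).card ≤ k := hkm
  omega
end
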